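/- arXiv:0810.2188 — 3 statements merged into one kernel-verified Lean document; each statement's English description precedes it below -/
import Mathlib

section
/- The quadratic polynomials h(x + iy) = x² − y² and h(x + iy) = 2xy, as well as any affine function, have discrete Laplacian zero at every vertex of an isoradial graph; and for φ(x+iy) = ax² + bxy + cy², the discrete Laplacian equals the continuous one: [Δ^δ φ](u) = 2(a + c) at every vertex u. -/
/-!
Everything reduces to the three star identities `∑ tan θₛ (uₛ − u) = 0`,
`∑ tan θₛ (uₛ² − u²) = 0` and `∑ tan θₛ |uₛ − u|² = 4μ`. The first two hold because
`tan θₛ (uₛ − u)` and `tan θₛ (uₛ² − u²)` are `−i` times the increments of `w` and `w²`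
along the closed dual cycle, so their sums telescope to zero; the third is the identity
`tan θ (2δ cos θ)² = 2δ² sin 2θ` on each rhombus. Taking real and imaginary parts, the
unnormalised Laplacian kills `x`, `y`, `x² − y²` and `2xy`, and maps `x² + y²` to `4μ`;
the claims follow by linearity, since `ax² + bxy + cy²` is
`(a + c)/2 (x² + y²) + (a − c)/2 (x² − y²) + b/2 (2xy)`.
-/

open Finset

theorem Fintype.sum_sub_add_right_eq_zero {G M : Type*} [AddGroup G] [Fintype G]
    [AddCommGroup M] (f : G → M) (c : G) : ∑ x, (f (x + c) - f x) = 0 := by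
  rw [sum_sub_distrib, sub_eq_zero]
  exact Fintype.sum_equiv (Equiv.addRight c) _ _ fun _ => rfl

theorem sum_eq_zero_of_eq_mul_sub_add_right {G R : Type*} [AddGroup G] [Fintype G]
    [CommRing R] {z g : G → R} {c : G} (a : R) (h : ∀ x, z x = a * (g (x + c) - g x)) :
    ∑ x, z x = 0 := by
  simp_rw [h, ← mul_sum, Fintype.sum_sub_add_right_eq_zero, mul_zero]

theorem Real.tan_mul_sq_two_mul_cos {θ : ℝ} (hθ : Real.cos θ ≠ 0) (δ : ℝ) :
    Real.tan θ * (2 * δ * Real.cos θ) ^ 2 = 2 * δ ^ 2 * Real.sin (2 * θ) := by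
  rw [Real.tan_eq_sin_div_cos, Real.sin_two_mul]
  field_simp

section StarDiffSum

variable {ι : Type*} [Fintype ι] (w : ι → ℝ) (u : ℂ) (us : ι → ℂ)

/-- The discrete Laplacian at `u` without the normalising factor `μ⁻¹`. -/
def starDiffSum : (ℂ → ℝ) →ₗ[ℝ] ℝ where
  toFun φ := ∑ s, w s * (φ (us s) - φ u)
  map_add' φ ψ := by simp only [Pi.add_apply, ← sum_add_distrib]; congr! 1; ring
  map_smul' a φ := by
    simp only [Pi.smul_apply, smul_eq_mul, RingHom.id_apply, mul_sum]; congr! 1; ring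

theorem starDiffSum_apply (φ : ℂ → ℝ) :
    starDiffSum w u us φ = ∑ s, w s * (φ (us s) - φ u) := rfl

theorem starDiffSum_const (c : ℝ) : starDiffSum w u us (fun _ => c) = 0 := by
  simp [starDiffSum_apply]

theorem starDiffSum_re_comp (g : ℂ → ℂ) :
    starDiffSum w u us (fun z => (g z).re) = (∑ s, (w s : ℂ) * (g (us s) - g u)).re := by
  simp [starDiffSum_apply, Complex.re_sum]

theorem starDiffSum_im_comp (g : ℂ → ℂ) :
    starDiffSum w u us (fun z => (g z).im) = (∑ s, (w s : ℂ) * (g (us s) - g u)).im := by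
  simp [starDiffSum_apply, Complex.im_sum]

theorem starDiffSum_re :
    starDiffSum w u us Complex.re = (∑ s, (w s : ℂ) * (us s - u)).re :=
  starDiffSum_re_comp w u us id

theorem starDiffSum_im :
    starDiffSum w u us Complex.im = (∑ s, (w s : ℂ) * (us s - u)).im :=
  starDiffSum_im_comp w u us id

theorem starDiffSum_re_sq_sub_im_sq :
    starDiffSum w u us (fun z => z.re ^ 2 - z.im ^ 2) =
      (∑ s, (w s : ℂ) * (us s ^ 2 - u ^ 2)).re := by
  rw [← starDiffSum_re_comp w u us (· ^ 2)]
  simp only [sq, Complex.mul_re]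

theorem starDiffSum_two_mul_re_mul_im :
    starDiffSum w u us (fun z => 2 * z.re * z.im) =
      (∑ s, (w s : ℂ) * (us s ^ 2 - u ^ 2)).im := by
  rw [← starDiffSum_im_comp w u us (· ^ 2)]
  congr 1
  funext z
  simp only [sq, Complex.mul_im]
  ring

theorem starDiffSum_affine (α β γ : ℝ) :
    starDiffSum w u us (fun z => α * z.re + β * z.im + γ) =
      α * starDiffSum w u us Complex.re + β * starDiffSum w u us Complex.im := by
  have : (fun z : ℂ => α * z.re + β * z.im + γ) = α • Complex.re + β • Complex.im + fun _ => γ :=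
    rfl
  rw [this, map_add, map_add, map_smul, map_smul, starDiffSum_const, smul_eq_mul, smul_eq_mul,
    add_zero]

theorem starDiffSum_normSq (hre : starDiffSum w u us Complex.re = 0)
    (him : starDiffSum w u us Complex.im = 0) :
    starDiffSum w u us Complex.normSq = ∑ s, w s * ‖us s - u‖ ^ 2 := by
  have : (Complex.normSq : ℂ → ℝ) = (fun z => Complex.normSq (z - u)) +
      (2 * u.re) • Complex.re + (2 * u.im) • Complex.im + fun _ => -Complex.normSq u := by
    funext z
    simp only [Pi.add_apply, Pi.smul_apply, smul_eq_mul, Complex.normSq_apply, Complex.sub_re,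
      Complex.sub_im]
    ring
  rw [this, map_add, map_add, map_add, map_smul, map_smul, hre, him, starDiffSum_const,
    starDiffSum_apply]
  simp [Complex.normSq_eq_norm_sq]

theorem starDiffSum_quadratic (a b c : ℝ) :
    starDiffSum w u us (fun z => a * z.re ^ 2 + b * (z.re * z.im) + c * z.im ^ 2) =
      (a + c) / 2 * starDiffSum w u us Complex.normSq +
      (a - c) / 2 * starDiffSum w u us (fun z => z.re ^ 2 - z.im ^ 2) +
      b / 2 * starDiffSum w u us (fun z => 2 * z.re * z.im) := by
  rw [← smul_eq_mul, ← smul_eq_mul (a := (a - c) / 2), ← smul_eq_mul (a := b / 2), ← map_smul,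
    ← map_smul, ← map_smul, ← map_add, ← map_add]
  congr 1
  funext z
  simp only [Pi.add_apply, Pi.smul_apply, smul_eq_mul, Complex.normSq_apply]
  ring

end StarDiffSum

/-- approximation property, Lemma 2.2(i): On an isoradial graph of
mesh `δ` (a vertex `u` with neighbors `us s`, dual cycle `ws s`, rhombi half-angles
`θ s`), every affine function and the quadratics `x² − y²`, `2xy` have vanishing
discrete Laplacian at `u`, and for `φ(x+iy) = ax² + bxy + cy²` the discrete
Laplacian equals the continuous one, `[Δ^δ φ](u) = 2(a + c)`, where
`[Δ^δ φ](u) = μ⁻¹ ∑ tan θ_s (φ(u_s) − φ(u))` and `μ = (δ²/2) ∑ sin 2θ_s`. -/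
theorem discrete_laplacian_on_quadratics (n : ℕ) [NeZero n] (δ : ℝ) (hδ : 0 < δ)
    (θ : ZMod n → ℝ) (hθ : ∀ s, θ s ∈ Set.Ioo 0 (Real.pi / 2))
    (u : ℂ) (us ws : ZMod n → ℂ)
    (hlin : ∀ s, (Real.tan (θ s) : ℂ) * (us s - u) = -Complex.I * (ws (s + 1) - ws s))
    (hquad : ∀ s, (Real.tan (θ s) : ℂ) * ((us s) ^ 2 - u ^ 2)
        = -Complex.I * ((ws (s + 1)) ^ 2 - (ws s) ^ 2))
    (hlen : ∀ s, ‖us s - u‖ = 2 * δ * Real.cos (θ s))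
    (μ : ℝ) (hμ : μ = δ ^ 2 / 2 * ∑ s : ZMod n, Real.sin (2 * θ s))
    (Δd : (ℂ → ℝ) → ℝ)
    (hΔd : ∀ φ : ℂ → ℝ,
      Δd φ = μ⁻¹ * ∑ s : ZMod n, Real.tan (θ s) * (φ (us s) - φ u)) :
    (∀ α β γ : ℝ, Δd (fun z => α * z.re + β * z.im + γ) = 0) ∧
    Δd (fun z => z.re ^ 2 - z.im ^ 2) = 0 ∧
    Δd (fun z => 2 * z.re * z.im) = 0 ∧
    (∀ a b c : ℝ,
      Δd (fun z => a * z.re ^ 2 + b * (z.re * z.im) + c * z.im ^ 2) = 2 * (a + c)) := by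
  set L := starDiffSum (fun s => Real.tan (θ s)) u us
  have hΔ : ∀ φ, Δd φ = μ⁻¹ * L φ := hΔd
  have hcos s : Real.cos (θ s) ≠ 0 := (Real.cos_pos_of_mem_Ioo
    ⟨by linarith [(hθ s).1, Real.pi_pos], (hθ s).2⟩).ne'
  have hμ0 : μ ≠ 0 := by
    rw [hμ]
    refine mul_ne_zero (by positivity) (sum_pos (fun s _ => ?_) univ_nonempty).ne'
    exact Real.sin_pos_of_pos_of_lt_pi (by linarith [(hθ s).1]) (by linarith [(hθ s).2])
  have hlin_sum := sum_eq_zero_of_eq_mul_sub_add_right _ hlin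
  have hquad_sum := sum_eq_zero_of_eq_mul_sub_add_right (g := fun s => ws s ^ 2) _ hquad
  have hre : L Complex.re = 0 := by rw [starDiffSum_re, hlin_sum, Complex.zero_re]
  have him : L Complex.im = 0 := by rw [starDiffSum_im, hlin_sum, Complex.zero_im]
  have hre2 : L (fun z => z.re ^ 2 - z.im ^ 2) = 0 := by
    rw [starDiffSum_re_sq_sub_im_sq, hquad_sum, Complex.zero_re]
  have him2 : L (fun z => 2 * z.re * z.im) = 0 := by
    rw [starDiffSum_two_mul_re_mul_im, hquad_sum, Complex.zero_im]
  have hnormSq : L Complex.normSq = 4 * μ := by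
    refine (starDiffSum_normSq _ u us hre him).trans ?_
    simp_rw [hlen, Real.tan_mul_sq_two_mul_cos (hcos _), hμ, ← mul_sum]
    ring
  refine ⟨fun α β γ => ?_, ?_, ?_, fun a b c => ?_⟩
  · rw [hΔ, starDiffSum_affine, hre, him]; ring
  · rw [hΔ, hre2, mul_zero]
  · rw [hΔ, him2, mul_zero]
  · rw [hΔ, starDiffSum_quadratic, hnormSq, hre2, him2]
    field_simp
    ring
end

section
/- Let φ ∈ C³ be defined on the disc B(u, 2δ) ⊂ ℂ for a vertex u of an isoradial graph of mesh δ. Then |[Δ^δ (φ|_Γ)](u) − [Δφ](u)| ≤ C · δ · max_{B(u,2δ)} |D³φ|, where C is an absolute constant depending only on the lower bound η for the rhombi angles. -/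
/-!
Expand `φ` to second order at `u` along each edge `u → u_s`. The closing conditions of the rhombi
telescope to `∑ tan θ_s (u_s - u) = 0` and `∑ tan θ_s (u_s - u)² = 0`, so the first-order terms
cancel and the second-order terms add up to `μ (φ_xx + φ_yy)` with
`μ = ¼ ∑ tan θ_s |u_s - u|² = (δ²/2) ∑ sin 2θ_s`. The Taylor remainders are at most
`M |u_s - u|³ / 2 ≤ δ M |u_s - u|²`, so their weighted sum is at most `4 δ M μ`.
-/

open Metric Finset

theorem Fintype.sum_comp_add_sub_eq_zero {G A : Type*} [AddGroup G] [Fintype G]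
    [AddCommGroup A] (w : G → A) (a : G) : ∑ g, (w (g + a) - w g) = 0 := by
  rw [sum_sub_distrib, sub_eq_zero]
  exact Fintype.sum_equiv (Equiv.addRight a) _ _ fun _ ↦ rfl

theorem sum_mul_sub_sq_eq_zero {ι R : Type*} [Fintype ι] [CommRing R] {c z : ι → R} {u : R}
    (h1 : ∑ i, c i * (z i - u) = 0) (h2 : ∑ i, c i * (z i ^ 2 - u ^ 2) = 0) :
    ∑ i, c i * (z i - u) ^ 2 = 0 := by
  have hexpand : ∀ i, c i * (z i - u) ^ 2 = c i * (z i ^ 2 - u ^ 2) - 2 * u * (c i * (z i - u)) :=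
    fun i ↦ by ring
  rw [sum_congr rfl fun i _ ↦ hexpand i, sum_sub_distrib, ← mul_sum, h1, h2, mul_zero, sub_zero]

theorem abs_inv_mul_sub_le_of_abs_sub_mul_le {μ x y K : ℝ} (hμ : 0 < μ)
    (h : |x - μ * y| ≤ μ * K) : |μ⁻¹ * x - y| ≤ K := by
  have hrw : μ⁻¹ * x - y = μ⁻¹ * (x - μ * y) := by rw [mul_sub, inv_mul_cancel_left₀ hμ.ne']
  rw [hrw, abs_mul, abs_of_pos (inv_pos.2 hμ)]
  exact (inv_mul_le_iff₀ hμ).2 h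

section

variable {E F : Type*} [NormedAddCommGroup E] [NormedSpace ℝ E] [NormedAddCommGroup F]
  [NormedSpace ℝ F]

theorem uniqueDiffOn_closedBall (u : E) {r : ℝ} (hr : 0 < r) : UniqueDiffOn ℝ (closedBall u r) :=
  uniqueDiffOn_convex (convex_closedBall u r) (by
    rw [interior_closedBall u hr.ne']
    exact nonempty_ball.2 hr)

open Nat in
theorem Convex.norm_sub_taylor_iteratedFDerivWithin_le {f : E → F} {s : Set E} {x y : E}
    {n : ℕ} {M : ℝ} (hs : Convex ℝ s) (hs' : UniqueDiffOn ℝ s) (hf : ContDiffOn ℝ (n + 1) f s)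
    (hx : x ∈ s) (hy : y ∈ s) (hM : ∀ z ∈ s, ‖iteratedFDerivWithin ℝ (n + 1) f s z‖ ≤ M) :
    ‖f y - ∑ k ∈ range (n + 1), (k ! : ℝ)⁻¹ • iteratedFDerivWithin ℝ k f s x (fun _ ↦ y - x)‖
      ≤ M * ‖y - x‖ ^ (n + 1) / n ! := by
  set L : ℝ →ᴬ[ℝ] E := ContinuousAffineMap.lineMap x y
  have hL : Set.MapsTo L (Set.Icc 0 1) s := hs.mapsTo_lineMap hx hy
  have hq := ((hf.ftaylorSeriesWithin hs').comp_continuousAffineMap L).mono hL.subset_preimage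
  have hderiv : ∀ k ≤ n + 1, ∀ t ∈ Set.Icc (0 : ℝ) 1,
      iteratedDerivWithin k (f ∘ L) (Set.Icc 0 1) t
        = iteratedFDerivWithin ℝ k f s (L t) (fun _ ↦ y - x) := by
    intro k hk t ht
    rw [iteratedDerivWithin_eq_iteratedFDerivWithin,
      ← hq.eq_iteratedFDerivWithin_of_uniqueDiffOn (mod_cast hk) uniqueDiffOn_Icc_zero_one ht]
    simp [ftaylorSeriesWithin, L]
  have hbound : ∀ t ∈ Set.Icc (0 : ℝ) 1,
      ‖iteratedDerivWithin (n + 1) (f ∘ L) (Set.Icc 0 1) t‖ ≤ M * ‖y - x‖ ^ (n + 1) := by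
    intro t ht
    rw [hderiv _ le_rfl t ht]
    calc _ ≤ ‖iteratedFDerivWithin ℝ (n + 1) f s (L t)‖ * ∏ _ : Fin (n + 1), ‖y - x‖ :=
          ContinuousMultilinearMap.le_opNorm _ _
      _ ≤ M * ‖y - x‖ ^ (n + 1) := by
          rw [prod_const, Finset.card_univ, Fintype.card_fin]
          gcongr
          exact hM _ (hL ht)
  have htaylor := taylor_mean_remainder_bound zero_le_one
    (hf.comp L.contDiff.contDiffOn hL) (Set.right_mem_Icc.2 zero_le_one) hbound
  have hL0 : L 0 = x := AffineMap.lineMap_apply_zero x y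
  have hL1 : L 1 = y := AffineMap.lineMap_apply_one x y
  rw [taylor_within_apply] at htaylor
  simp only [Function.comp_apply, hL1, sub_zero, one_pow, mul_one] at htaylor
  rwa [sum_congr rfl fun k hk ↦ by
    rw [hderiv k (by rw [mem_range] at hk; omega) 0 (Set.left_mem_Icc.2 zero_le_one), hL0]]
    at htaylor

open Complex in
theorem LinearMap.sum_smul_apply_self_eq {ι M : Type*} [Fintype ι] [AddCommGroup M] [Module ℝ M]
    (B : ℂ →ₗ[ℝ] ℂ →ₗ[ℝ] M) (c : ι → ℝ) (h : ι → ℂ) (hc : ∑ i, (c i : ℂ) * h i ^ 2 = 0) :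
    ∑ i, c i • B (h i) (h i) = ((∑ i, c i * ‖h i‖ ^ 2) / 2) • (B 1 1 + B I I) := by
  have hexpand : ∀ z : ℂ, B z z = (z.re * z.re) • B 1 1 + (z.re * z.im) • (B 1 I + B I 1)
      + (z.im * z.im) • B I I := by
    intro z
    have hz : z = z.re • (1 : ℂ) + z.im • I := by rw [real_smul, real_smul, mul_one, re_add_im]
    conv_lhs => rw [hz]
    simp only [map_add, map_smul, LinearMap.add_apply,
      LinearMap.smul_apply, smul_add, smul_smul]
    module
  -- `∑ c h² = 0` makes the weighted second moments isotropic: `∑ c x² = ∑ c y²`, `∑ c x y = 0`.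
  have hre : ∑ i, c i * ((h i).re * (h i).re - (h i).im * (h i).im) = 0 := by
    simpa [re_sum, sq] using congrArg re hc
  have him : ∑ i, c i * ((h i).re * (h i).im) = 0 := by
    have := congrArg im hc
    simp only [im_sum, sq, mul_im, mul_re, ofReal_re, ofReal_im, zero_im] at this
    rw [← mul_right_inj' (two_ne_zero (α := ℝ)), mul_zero, mul_sum, ← this]
    exact sum_congr rfl fun i _ ↦ by ring
  have hsplit : ∑ i, c i * ‖h i‖ ^ 2
      = ∑ i, c i * ((h i).re * (h i).re) + ∑ i, c i * ((h i).im * (h i).im) := by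
    rw [← sum_add_distrib]
    exact sum_congr rfl fun i _ ↦ by rw [Complex.sq_norm, normSq_apply]; ring
  have hdiff : ∑ i, c i * ((h i).re * (h i).re) - ∑ i, c i * ((h i).im * (h i).im) = 0 := by
    rw [← sum_sub_distrib, ← hre]
    exact sum_congr rfl fun i _ ↦ by ring
  have hre' : ∑ i, c i * ((h i).re * (h i).re) = (∑ i, c i * ‖h i‖ ^ 2) / 2 := by linarith
  have him' : ∑ i, c i * ((h i).im * (h i).im) = (∑ i, c i * ‖h i‖ ^ 2) / 2 := by linarith
  rw [sum_congr rfl fun i _ ↦ congrArg (c i • ·) (hexpand (h i))]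
  simp only [smul_add, smul_smul, sum_add_distrib]
  simp only [← sum_smul, hre', him', him, zero_smul, add_zero]

open Complex in
theorem Convex.norm_sum_smul_sub_sub_smul_laplacian_le {ι : Type*} [Fintype ι] {f : ℂ → F}
    {s : Set ℂ} {u : ℂ} {r M : ℝ} {c : ι → ℝ} {z : ι → ℂ} (hs : Convex ℝ s)
    (hs' : UniqueDiffOn ℝ s) (hf : ContDiffOn ℝ 3 f s) (hu : u ∈ s) (hz : ∀ i, z i ∈ s)
    (hM : ∀ w ∈ s, ‖iteratedFDerivWithin ℝ 3 f s w‖ ≤ M) (hc : ∀ i, 0 ≤ c i)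
    (hr : ∀ i, ‖z i - u‖ ≤ r) (h1 : ∑ i, (c i : ℂ) * (z i - u) = 0)
    (h2 : ∑ i, (c i : ℂ) * (z i - u) ^ 2 = 0) :
    ‖∑ i, c i • (f (z i) - f u) - ((∑ i, c i * ‖z i - u‖ ^ 2) / 4) •
        (iteratedFDerivWithin ℝ 2 f s u ![1, 1] + iteratedFDerivWithin ℝ 2 f s u ![I, I])‖
      ≤ (∑ i, c i * ‖z i - u‖ ^ 2) / 4 * (2 * r * M) := by
  rw [iteratedFDerivWithin_two_apply' f hs' hu, iteratedFDerivWithin_two_apply' f hs' hu]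
  set D := fderivWithin ℝ f s u
  set B := fderivWithin ℝ (fderivWithin ℝ f s) s u
  set R : ι → F := fun i ↦ f (z i) - f u - D (z i - u) - (1 / 2 : ℝ) • B (z i - u) (z i - u)
  have hR : ∀ i, ‖R i‖ ≤ M * ‖z i - u‖ ^ 3 / 2 := fun i ↦ by
    have := hs.norm_sub_taylor_iteratedFDerivWithin_le (n := 2) hs' hf hu (hz i) hM
    convert this using 2
    · simp only [R, sum_range_succ, sum_range_zero, iteratedFDerivWithin_zero_apply,
        iteratedFDerivWithin_one_apply (hs' u hu), iteratedFDerivWithin_two_apply f hs' hu]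
      norm_num
      abel
    · norm_num [Nat.factorial]
  have hlin : ∑ i, c i • D (z i - u) = 0 := by
    simp_rw [← map_smul, ← map_sum, real_smul, h1, map_zero]
  have hquad : ∑ i, c i • B (z i - u) (z i - u)
      = ((∑ i, c i * ‖z i - u‖ ^ 2) / 2) • (B 1 1 + B I I) :=
    LinearMap.sum_smul_apply_self_eq B.toLinearMap₁₂ c (fun i ↦ z i - u) h2
  have hsplit : ∑ i, c i • (f (z i) - f u) - ((∑ i, c i * ‖z i - u‖ ^ 2) / 4) • (B 1 1 + B I I)
      = ∑ i, c i • R i := by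
    have hexpand : ∀ i, f (z i) - f u = D (z i - u) + (1 / 2 : ℝ) • B (z i - u) (z i - u) + R i :=
      fun i ↦ by simp only [R]; abel
    simp only [hexpand, smul_add, sum_add_distrib, hlin, smul_comm (c _) (1 / 2 : ℝ), ← smul_sum,
      hquad]
    module
  have hM0 : 0 ≤ M := (norm_nonneg _).trans (hM u hu)
  rw [hsplit]
  calc ‖∑ i, c i • R i‖ ≤ ∑ i, c i * ‖R i‖ := by
        refine (norm_sum_le _ _).trans_eq (sum_congr rfl fun i _ ↦ ?_)
        rw [norm_smul, Real.norm_of_nonneg (hc i)]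
    _ ≤ ∑ i, c i * (‖z i - u‖ ^ 2 * (r * M / 2)) := by
        gcongr with i
        · exact hc i
        calc ‖R i‖ ≤ M * ‖z i - u‖ ^ 3 / 2 := hR i
          _ = ‖z i - u‖ ^ 2 * (‖z i - u‖ * M / 2) := by ring
          _ ≤ ‖z i - u‖ ^ 2 * (r * M / 2) := by gcongr; exact hr i
    _ = (∑ i, c i * ‖z i - u‖ ^ 2) / 4 * (2 * r * M) := by
        rw [sum_div, sum_mul]
        exact sum_congr rfl fun i _ ↦ by ring

end

open Real in
/-- approximation property, Lemma 2.2(ii): Let `φ ∈ C³` on the disc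
`B(u, 2δ)` around a vertex `u` of an isoradial graph of mesh `δ` whose rhombi
half-angles lie in `[η, π/2 − η]`. Then
`|[Δ^δ (φ|_Γ)](u) − [Δφ](u)| ≤ C · δ · max_{B(u,2δ)} |D³φ|`,
with `C` depending only on `η`. Here `[Δ^δ φ](u) = μ⁻¹ ∑ tan θ_s (φ(u_s) − φ(u))`,
`μ = (δ²/2) ∑ sin 2θ_s`, and `[Δφ](u) = D²φ(u)[1,1] + D²φ(u)[i,i]`. -/
theorem discrete_laplacian_approximation :
    ∀ η : ℝ, 0 < η → η < Real.pi / 4 →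
    ∃ C : ℝ, 0 < C ∧
      ∀ (n : ℕ) [NeZero n] (δ : ℝ), 0 < δ →
      ∀ (θ : ZMod n → ℝ), (∀ s, θ s ∈ Set.Icc η (Real.pi / 2 - η)) →
      ∀ (u : ℂ) (us ws : ZMod n → ℂ),
      (∀ s, (Real.tan (θ s) : ℂ) * (us s - u) = -Complex.I * (ws (s + 1) - ws s)) →
      (∀ s, (Real.tan (θ s) : ℂ) * ((us s) ^ 2 - u ^ 2)
          = -Complex.I * ((ws (s + 1)) ^ 2 - (ws s) ^ 2)) →
      (∀ s, ‖us s - u‖ = 2 * δ * Real.cos (θ s)) →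
      (∑ s : ZMod n, (Real.pi - 2 * θ s)) = 2 * Real.pi →
      ∀ (φ : ℂ → ℝ) (M : ℝ),
      ContDiffOn ℝ 3 φ (closedBall u (2 * δ)) →
      (∀ z ∈ closedBall u (2 * δ),
        ‖iteratedFDerivWithin ℝ 3 φ (closedBall u (2 * δ)) z‖ ≤ M) →
      |(δ ^ 2 / 2 * ∑ s : ZMod n, Real.sin (2 * θ s))⁻¹
          * (∑ s : ZMod n, Real.tan (θ s) * (φ (us s) - φ u))
        - (iteratedFDerivWithin ℝ 2 φ (closedBall u (2 * δ)) u ![1, 1]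
            + iteratedFDerivWithin ℝ 2 φ (closedBall u (2 * δ)) u
                ![Complex.I, Complex.I])|
        ≤ C * δ * M := by
  intro η hη _
  refine ⟨4, by norm_num, fun n _ δ hδ θ hθ u us ws hlin hquad hnorm _ φ M hφ hM ↦ ?_⟩
  have hθ' : ∀ s, 0 < θ s ∧ θ s < π / 2 := fun s ↦
    ⟨hη.trans_le (hθ s).1, (hθ s).2.trans_lt (by linarith)⟩
  have hμ : (∑ s, tan (θ s) * ‖us s - u‖ ^ 2) / 4 = δ ^ 2 / 2 * ∑ s, sin (2 * θ s) := by
    rw [mul_sum, sum_div]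
    refine sum_congr rfl fun s _ ↦ ?_
    have hcos : cos (θ s) ≠ 0 := (cos_pos_of_mem_Ioo ⟨by linarith [hθ' s], (hθ' s).2⟩).ne'
    rw [hnorm s, sin_two_mul, ← tan_mul_cos hcos]
    ring
  have hμpos : 0 < δ ^ 2 / 2 * ∑ s, sin (2 * θ s) := mul_pos (by positivity) <| sum_pos
    (fun s _ ↦ sin_pos_of_pos_of_lt_pi (by linarith [hθ' s]) (by linarith [hθ' s])) univ_nonempty
  have h1 : ∑ s, (tan (θ s) : ℂ) * (us s - u) = 0 := by
    rw [sum_congr rfl fun s _ ↦ hlin s, ← mul_sum, Fintype.sum_comp_add_sub_eq_zero, mul_zero]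
  have h2 : ∑ s, (tan (θ s) : ℂ) * (us s ^ 2 - u ^ 2) = 0 := by
    rw [sum_congr rfl fun s _ ↦ hquad s, ← mul_sum,
      Fintype.sum_comp_add_sub_eq_zero (fun s ↦ ws s ^ 2), mul_zero]
  have hr : ∀ s, ‖us s - u‖ ≤ 2 * δ := fun s ↦ by
    rw [hnorm s]
    exact mul_le_of_le_one_right (by positivity) (cos_le_one _)
  have key := (convex_closedBall u (2 * δ)).norm_sum_smul_sub_sub_smul_laplacian_le
    (uniqueDiffOn_closedBall u (by positivity)) hφ (mem_closedBall_self (by positivity))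
    (fun s ↦ mem_closedBall_iff_norm.2 (hr s)) hM
    (fun s ↦ (tan_pos_of_pos_of_lt_pi_div_two (hθ' s).1 (hθ' s).2).le) hr h1
    (sum_mul_sub_sq_eq_zero h1 h2)
  rw [hμ] at key
  simp only [smul_eq_mul, Real.norm_eq_abs] at key
  exact (abs_inv_mul_sub_le_of_abs_sub_mul_le hμpos key).trans_eq (by ring)
end

section
/- If H is discrete holomorphic on Λ = Γ ∪ Γ*, then the averaged function [m^δ H](z) = ¼(H(v_1) + H(v_2) + H(v_3) + H(v_4)), where v_1,...,v_4 are the four vertices of the rhombus centered at z, is discrete holomorphic on ◊, i.e., [∂̄^δ (m^δ H)](v) = 0 for every v ∈ Λ where it is defined. -/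
open Complex ComplexConjugate

/-!
Around a vertex `u`, each rhombus `u, v, w, w'` has orthogonal diagonals `v - u` and `w' - w`, so
`conj (v - u) / (v - u) = - conj (w' - w) / (w' - w)`. This turns the discrete Cauchy–Riemann
equation into `(w' - w) (H v - H u) = (v - u) (H w' - H w)`, and with `v - u = w + w' - 2u` the
rhombus term `i (w' - w) [m H](z)` becomes the difference `g w' - g w` of
`g z = i (z H u + H z (z - u)) / 2` (`averagingPrimitive H u`). The sum over the closed cycle of dual vertices telescopes.
-/

lemma conj_mul_eq_neg_conj_mul_of_ofReal_mul_eq {t : ℝ} {d₁ d₂ : ℂ}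
    (h : (t : ℂ) * d₁ = -I * d₂) : conj d₁ * d₂ = -(conj d₂ * d₁) := by
  by_cases ht : (t : ℂ) = 0
  · have hd₂ : d₂ = 0 := by simpa [ht] using h
    simp [hd₂]
  have hconj : (t : ℂ) * conj d₁ = I * conj d₂ := by
    simpa using congrArg conj h
  refine mul_left_cancel₀ ht ?_
  linear_combination d₂ * hconj + conj d₂ * h

lemma mul_sub_eq_mul_sub_of_div_conj_add_div_conj_eq_zero {d₁ d₂ a b : ℂ}
    (hd₁ : d₁ ≠ 0) (hd₂ : d₂ ≠ 0) (horth : conj d₁ * d₂ = -(conj d₂ * d₁))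
    (h : a / conj d₁ + b / conj d₂ = 0) : d₂ * a = d₁ * b := by
  have hc₁ : conj d₁ ≠ 0 := (map_ne_zero conj).mpr hd₁
  have hc₂ : conj d₂ ≠ 0 := (map_ne_zero conj).mpr hd₂
  have hcleared : a * conj d₂ + b * conj d₁ = 0 := by
    field_simp at h
    linear_combination h
  refine mul_left_cancel₀ hc₁ ?_
  linear_combination a * horth - d₁ * hcleared

noncomputable def averagingPrimitive (H : ℂ → ℂ) (u z : ℂ) : ℂ :=
  I * (z * H u + H z * (z - u)) / 2

lemma rhombus_term_eq_averagingPrimitive_sub {t : ℝ} {u v w w' : ℂ} {H : ℂ → ℂ}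
    (hlin : (t : ℂ) * (v - u) = -I * (w' - w)) (hmid : (u + v) / 2 = (w + w') / 2)
    (hhol : (H v - H u) / (conj v - conj u) + (H w' - H w) / (conj w' - conj w) = 0) :
    I * (w' - w) * ((H u + H v + H w + H w') / 4)
      = averagingPrimitive H u w' - averagingPrimitive H u w := by
  unfold averagingPrimitive
  by_cases hw : w' - w = 0
  · rw [sub_eq_zero.mp hw]
    ring
  have hv : v - u ≠ 0 := by
    rintro hv
    rw [hv, mul_zero, zero_eq_mul] at hlin
    exact hw (hlin.resolve_left (by simp))
  rw [← map_sub, ← map_sub] at hhol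
  have hCR : (w' - w) * (H v - H u) = (v - u) * (H w' - H w) :=
    mul_sub_eq_mul_sub_of_div_conj_add_div_conj_eq_zero hv hw
      (conj_mul_eq_neg_conj_mul_of_ofReal_mul_eq hlin) hhol
  linear_combination (I / 4) * hCR + (I / 2) * (H w' - H w) * hmid

theorem averaging_preserves_holomorphicity_general (n : ℕ) [NeZero n]
    (θ : ZMod n → ℝ)
    (u : ℂ) (us ws : ZMod n → ℂ)
    (hlin : ∀ s, (Real.tan (θ s) : ℂ) * (us s - u) = -I * (ws (s + 1) - ws s))
    (hmid : ∀ s, (u + us s) / 2 = (ws s + ws (s + 1)) / 2)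
    (H : ℂ → ℂ)
    (hhol : ∀ s, (H (us s) - H u) / ((starRingEnd ℂ) (us s) - (starRingEnd ℂ) u)
        + (H (ws (s + 1)) - H (ws s))
            / ((starRingEnd ℂ) (ws (s + 1)) - (starRingEnd ℂ) (ws s)) = 0) :
    ∑ s : ZMod n, I * (ws (s + 1) - ws s)
        * ((H u + H (us s) + H (ws s) + H (ws (s + 1))) / 4) = 0 := by
  let g : ZMod n → ℂ := fun s => averagingPrimitive H u (ws s)
  calc ∑ s : ZMod n, I * (ws (s + 1) - ws s)
        * ((H u + H (us s) + H (ws s) + H (ws (s + 1))) / 4)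
      = ∑ s : ZMod n, (g (s + 1) - g s) :=
        Finset.sum_congr rfl fun s _ =>
          rhombus_term_eq_averagingPrimitive_sub (hlin s) (hmid s) (hhol s)
    _ = 0 := by
        rw [Finset.sum_sub_distrib, sub_eq_zero]
        exact Equiv.sum_comp (Equiv.addRight 1) g

/-- If `H` is discrete holomorphic on `Λ = Γ ∪ Γ*`, then the averaged
function `[m^δ H](z) = ¼(H(v₁) + H(v₂) + H(v₃) + H(v₄))` over the four vertices of
the rhombus centered at `z` is discrete holomorphic on `◊`: at a vertex `u` with
neighbors `us s`, dual cycle `ws s` and rhombi centers `z_s = (u + us s)/2`,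
`[∂̄^δ (m^δ H)](u) = (4μ_Λ(u))⁻¹ ∑ i(w_{s+1} − w_s)·[m^δ H](z_s) = 0`. -/
theorem averaging_preserves_holomorphicity (n : ℕ) [NeZero n] (δ : ℝ) (hδ : 0 < δ)
    (θ : ZMod n → ℝ) (hθ : ∀ s, θ s ∈ Set.Ioo 0 (Real.pi / 2))
    (u : ℂ) (us ws : ZMod n → ℂ)
    (hlin : ∀ s, (Real.tan (θ s) : ℂ) * (us s - u) = -I * (ws (s + 1) - ws s))
    (hlen : ∀ s, ‖us s - u‖ = 2 * δ * Real.cos (θ s))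
    (hmid : ∀ s, (u + us s) / 2 = (ws s + ws (s + 1)) / 2)
    (H : ℂ → ℂ)
    (hhol : ∀ s, (H (us s) - H u) / ((starRingEnd ℂ) (us s) - (starRingEnd ℂ) u)
        + (H (ws (s + 1)) - H (ws s))
            / ((starRingEnd ℂ) (ws (s + 1)) - (starRingEnd ℂ) (ws s)) = 0) :
    ∑ s : ZMod n, I * (ws (s + 1) - ws s)
        * ((H u + H (us s) + H (ws s) + H (ws (s + 1))) / 4) = 0 :=
  averaging_preserves_holomorphicity_general n θ u us ws hlin hmid H hhol
end
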